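/- Let n, m ≥ 3. The Laplacian-energy-like invariant of the Union Jack lattice satisfies LEL(UJL(n,m)) = Σ_{i=0}^{n−1} Σ_{j=0}^{m−1} √( (6 − cos α_i − cos β_j) + √((6 − cos α_i − cos β_j)² − 4(7 − 3 cos α_i − 3 cos β_j − cos α_i · cos β_j)) ) + Σ_{i=0}^{n−1} Σ_{j=0}^{m−1} √( (6 − cos α_i − cos β_j) − √((6 − cos α_i − cos β_j)² − 4(7 − 3 cos α_i − 3 cos β_j − cos α_i · cos β_j)) ), where α_i = 2πi/n and β_j = 2πj/m. -/
import Mathlib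


open scoped Classical

noncomputable section
set_option linter.unusedSectionVars false

/-- Vertex set of the Union Jack lattice `UJL(n,m)`: the first summand consists of the
"grid vertices" of the `n × m` toroidal square lattice, the second summand of the
"face vertices" inserted in each face. -/
abbrev UJLVert (n m : ℕ) : Type := (ZMod n × ZMod m) ⊕ (ZMod n × ZMod m)

/-- Base adjacency relation of the Union Jack lattice (to be symmetrized):
grid vertex `(i,j)` is related to the grid vertices `(i+1,j)` and `(i,j+1)`
(symmetrization yields all four grid neighbours `(i±1,j)`, `(i,j±1)`), and the
grid vertex `(i,j)` is related to the face vertices `(i,j)`, `(i-1,j)`, `(i,j-1)`,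
`(i-1,j-1)`, i.e. the face vertex `(k,l)` is adjacent to the grid vertices
`(k,l)`, `(k+1,l)`, `(k,l+1)`, `(k+1,l+1)`. -/
def UJLRel (n m : ℕ) : UJLVert n m → UJLVert n m → Prop
  | Sum.inl p, Sum.inl q => (q.1 = p.1 + 1 ∧ q.2 = p.2) ∨ (q.1 = p.1 ∧ q.2 = p.2 + 1)
  | Sum.inl p, Sum.inr q =>
      (q.1 = p.1 ∧ q.2 = p.2) ∨ (q.1 = p.1 - 1 ∧ q.2 = p.2) ∨
        (q.1 = p.1 ∧ q.2 = p.2 - 1) ∨ (q.1 = p.1 - 1 ∧ q.2 = p.2 - 1)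
  | _, _ => False

/-- The Union Jack lattice `UJL(n,m)` with toroidal boundary condition. -/
def UJL (n m : ℕ) : SimpleGraph (UJLVert n m) := SimpleGraph.fromRel (UJLRel n m)

/-- `cos α_i` where `α_i = 2 π i / n`. -/
def cosα (n i : ℕ) : ℝ := Real.cos (2 * Real.pi * i / n)

/-- The Laplacian matrix `L(UJL(n,m)) = D(UJL(n,m)) - A(UJL(n,m))`. -/
def laplacianUJL (n m : ℕ) [NeZero n] [NeZero m] :
    Matrix (UJLVert n m) (UJLVert n m) ℝ :=
  Matrix.diagonal (fun v => ((UJL n m).degree v : ℝ)) - (UJL n m).adjMatrix ℝ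

/-- The Laplacian-energy-like invariant of `UJL(n,m)`: the sum of the square roots of the
eigenvalues (with multiplicity, i.e. the roots of the characteristic polynomial) of the
Laplacian matrix `L(UJL(n,m)) = D(UJL(n,m)) − A(UJL(n,m))`. -/
def LEL_UJL (n m : ℕ) [NeZero n] [NeZero m] : ℝ :=
  ((laplacianUJL n m).charpoly.roots.map Real.sqrt).sum


namespace UJLhelp
open scoped Matrix

open Complex

/-- standard additive character of `ZMod n` in `ℂ`. -/
def ψ (n : ℕ) (a : ZMod n) : ℂ :=
  Complex.exp ((2 * Real.pi * a.val / n : ℝ) * Complex.I)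

lemma psi_zero (n : ℕ) : ψ n 0 = 1 := by simp [ψ]

lemma two_pi_nat_I (q : ℕ) : Complex.exp (((2 * Real.pi * q : ℝ) : ℂ) * Complex.I) = 1 := by
  rw [show (((2 * Real.pi * q : ℝ) : ℂ) * Complex.I) = (q : ℤ) * (2 * (Real.pi : ℂ) * Complex.I) by
    push_cast; ring]
  exact Complex.exp_int_mul_two_pi_mul_I q

lemma psi_add (n : ℕ) [NeZero n] (a b : ZMod n) : ψ n (a + b) = ψ n a * ψ n b := by
  have hn : (n : ℝ) ≠ 0 := by exact_mod_cast (NeZero.ne n)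
  obtain ⟨q, hq⟩ : ∃ q, a.val + b.val = (a + b).val + n * q :=
    ⟨(a.val + b.val) / n, by rw [ZMod.val_add]; exact (Nat.mod_add_div _ _).symm⟩
  rw [ψ, ψ, ψ]
  generalize (a + b).val = vab at hq ⊢
  generalize a.val = va at hq ⊢
  generalize b.val = vb at hq ⊢
  have hq' : (va : ℝ) + vb = vab + n * q := by exact_mod_cast hq
  have hab : (vab : ℝ) = va + vb - n * q := by linarith
  have key : (2 * Real.pi * vab / n : ℝ)
      = (2 * Real.pi * va / n) + (2 * Real.pi * vb / n) - 2 * Real.pi * q := by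
    rw [hab]; field_simp
  rw [key]
  push_cast
  rw [sub_mul, add_mul, Complex.exp_sub, Complex.exp_add]
  rw [show ((2 : ℂ) * Real.pi * q) * Complex.I = ((2 * Real.pi * q : ℝ) : ℂ) * Complex.I by
    push_cast; ring]
  rw [two_pi_nat_I]
  ring


lemma psi_mul_psi_neg (n : ℕ) [NeZero n] (a : ZMod n) : ψ n a * ψ n (-a) = 1 := by
  rw [← psi_add]; simp [psi_zero]

lemma psi_ne_zero (n : ℕ) (a : ZMod n) : ψ n a ≠ 0 := Complex.exp_ne_zero _

lemma psi_neg (n : ℕ) [NeZero n] (a : ZMod n) : ψ n (-a) = (ψ n a)⁻¹ :=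
  eq_inv_of_mul_eq_one_left (by rw [mul_comm]; exact psi_mul_psi_neg n a)

lemma conj_psi (n : ℕ) [NeZero n] (a : ZMod n) :
    (starRingEnd ℂ) (ψ n a) = ψ n (-a) := by
  rw [psi_neg, ψ, ← Complex.exp_conj, ← Complex.exp_neg]
  congr 1
  rw [map_mul, Complex.conj_I, Complex.conj_ofReal]
  ring

lemma psi_ne_one (n : ℕ) [NeZero n] {a : ZMod n} (h : a ≠ 0) : ψ n a ≠ 1 := by
  intro h1
  have hv0 : 0 < (a.val : ℝ) := by
    have : a.val ≠ 0 := fun hc => h ((ZMod.val_eq_zero a).mp hc)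
    exact_mod_cast Nat.pos_of_ne_zero this
  have hvn : (a.val : ℝ) < n := by exact_mod_cast ZMod.val_lt a
  have hn0 : (0:ℝ) < n := lt_trans hv0 hvn
  rw [ψ, Complex.exp_eq_one_iff] at h1
  obtain ⟨k, hk⟩ := h1
  generalize hgen : (a.val : ℝ) = v at hk hv0 hvn
  have him := congrArg Complex.im hk
  simp [Complex.mul_im] at him
  have hpi := Real.pi_pos
  have hveq : v = k * n := by
    rw [div_eq_iff (ne_of_gt hn0)] at him
    nlinarith [him]
  have hk0 : (0:ℝ) < (k:ℝ) := by nlinarith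
  have hk1 : ((k:ℝ)) < 1 := by nlinarith
  have : (0:ℤ) < k := by exact_mod_cast hk0
  have : k < 1 := by exact_mod_cast hk1
  omega

lemma sum_psi_mul (n : ℕ) [NeZero n] (d : ZMod n) :
    ∑ a : ZMod n, ψ n (a * d) = if d = 0 then (n : ℂ) else 0 := by
  split_ifs with h
  · subst h
    simp [psi_zero, Finset.card_univ, ZMod.card]
  · have key : ψ n d * ∑ a : ZMod n, ψ n (a * d) = ∑ a : ZMod n, ψ n (a * d) := by
      rw [Finset.mul_sum]
      have step : ∀ a : ZMod n, ψ n d * ψ n (a * d) = ψ n ((a + 1) * d) := by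
        intro a
        rw [← psi_add]
        congr 1
        ring
      calc (∑ a : ZMod n, ψ n d * ψ n (a * d)) = ∑ a : ZMod n, ψ n ((a + 1) * d) := by
            exact Finset.sum_congr rfl (fun a _ => step a)
        _ = ∑ a : ZMod n, ψ n (a * d) :=
            Fintype.sum_equiv (Equiv.addRight (1 : ZMod n)) _ _ (fun a => rfl)
    have h0 : (ψ n d - 1) * ∑ a : ZMod n, ψ n (a * d) = 0 := by
      rw [sub_mul, one_mul, key, sub_self]
    rcases mul_eq_zero.mp h0 with h1 | h2
    · exact absurd (sub_eq_zero.mp h1) (psi_ne_one n h)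
    · exact h2


lemma sum_ite_four {α : Type*} {M : Type*} [AddCommMonoid M] [Fintype α] [DecidableEq α] (f : α → M) (a b c d : α)
    (hab : a ≠ b) (hac : a ≠ c) (had : a ≠ d) (hbc : b ≠ c) (hbd : b ≠ d) (hcd : c ≠ d) :
    ∑ y : α, (if y = a ∨ y = b ∨ y = c ∨ y = d then f y else 0) = f a + f b + f c + f d := by
  have hpt : ∀ y : α, (if y = a ∨ y = b ∨ y = c ∨ y = d then f y else 0) =
      (if y = a then f y else 0) + (if y = b then f y else 0) +
      (if y = c then f y else 0) + (if y = d then f y else 0) := by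
    intro y
    by_cases h1 : y = a <;> by_cases h2 : y = b <;> by_cases h3 : y = c <;>
      by_cases h4 : y = d <;> simp_all
  rw [Finset.sum_congr rfl (fun y _ => hpt y)]
  rw [Finset.sum_add_distrib, Finset.sum_add_distrib, Finset.sum_add_distrib]
  simp [Finset.sum_ite_eq']

section Graph

variable {n m : ℕ}

lemma zmod_one_ne_zero (h : 3 ≤ n) : (1 : ZMod n) ≠ 0 := by
  haveI : NeZero n := ⟨by omega⟩
  intro hc
  have := congrArg ZMod.val hc
  rw [show (1 : ZMod n) = ((1 : ℕ) : ZMod n) by push_cast; rfl] at this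
  rw [ZMod.val_natCast_of_lt (by omega)] at this
  simp at this

lemma zmod_one_ne_neg_one (h : 3 ≤ n) : (1 : ZMod n) ≠ -1 := by
  haveI : NeZero n := ⟨by omega⟩
  intro hc
  have h2 : (1 : ZMod n) + 1 = 0 := eq_neg_iff_add_eq_zero.mp hc
  have h2' : ((2 : ℕ) : ZMod n) = 0 := by push_cast; rw [← h2]; ring
  have := congrArg ZMod.val h2'
  rw [ZMod.val_natCast_of_lt (by omega)] at this
  simp at this

lemma zmod_neg_one_ne_zero (h : 3 ≤ n) : (-1 : ZMod n) ≠ 0 := by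
  intro hc
  exact zmod_one_ne_zero h (neg_eq_zero.mp hc)

end Graph


section Adj

variable {n m : ℕ}

lemma adj_inl_inl (h3n : 3 ≤ n) (h3m : 3 ≤ m) (x y : ZMod n × ZMod m) :
    (UJL n m).Adj (Sum.inl x) (Sum.inl y) ↔
      (y = x + (1,0) ∨ y = x - (1,0) ∨ y = x + (0,1) ∨ y = x - (0,1)) := by
  rw [UJL, SimpleGraph.fromRel_adj]
  simp only [UJLRel, ne_eq, Sum.inl.injEq]
  constructor
  · rintro ⟨hne, (⟨h1, h2⟩ | ⟨h1, h2⟩) | (⟨h1, h2⟩ | ⟨h1, h2⟩)⟩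
    · exact Or.inl (Prod.ext_iff.mpr ⟨by simp [h1], by simp [h2]⟩)
    · exact Or.inr (Or.inr (Or.inl (Prod.ext_iff.mpr ⟨by simp [h1], by simp [h2]⟩)))
    · exact Or.inr (Or.inl (Prod.ext_iff.mpr ⟨by simp [h1], by simp [h2]⟩))
    · exact Or.inr (Or.inr (Or.inr (Prod.ext_iff.mpr ⟨by simp [h1], by simp [h2]⟩)))
  · rintro (h | h | h | h) <;> subst h
    · refine ⟨fun hc => ?_, Or.inl (Or.inl ⟨by simp, by simp⟩)⟩
      have := congrArg Prod.fst hc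
      simp at this
      exact zmod_one_ne_zero h3n this
    · refine ⟨fun hc => ?_, Or.inr (Or.inl ⟨by simp [sub_add_cancel], by simp⟩)⟩
      have := congrArg Prod.fst hc
      simp [sub_eq_iff_eq_add] at this
      exact zmod_one_ne_zero h3n (by linear_combination this)
    · refine ⟨fun hc => ?_, Or.inl (Or.inr ⟨by simp, by simp⟩)⟩
      have := congrArg Prod.snd hc
      simp at this
      exact zmod_one_ne_zero h3m this
    · refine ⟨fun hc => ?_, Or.inr (Or.inr ⟨by simp, by simp [sub_add_cancel]⟩)⟩
      have := congrArg Prod.snd hc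
      simp [sub_eq_iff_eq_add] at this
      exact zmod_one_ne_zero h3m (by linear_combination this)

lemma adj_inl_inr (x y : ZMod n × ZMod m) :
    (UJL n m).Adj (Sum.inl x) (Sum.inr y) ↔
      (y = x ∨ y = x - (1,0) ∨ y = x - (0,1) ∨ y = x - (1,1)) := by
  rw [UJL, SimpleGraph.fromRel_adj]
  simp only [UJLRel, ne_eq, or_false]
  constructor
  · rintro ⟨hne, ⟨h1, h2⟩ | ⟨h1, h2⟩ | ⟨h1, h2⟩ | ⟨h1, h2⟩⟩
    · exact Or.inl (Prod.ext_iff.mpr ⟨h1, h2⟩)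
    · exact Or.inr (Or.inl (Prod.ext_iff.mpr ⟨by simp [h1], by simp [h2]⟩))
    · exact Or.inr (Or.inr (Or.inl (Prod.ext_iff.mpr ⟨by simp [h1], by simp [h2]⟩)))
    · exact Or.inr (Or.inr (Or.inr (Prod.ext_iff.mpr ⟨by simp [h1], by simp [h2]⟩)))
  · rintro (h | h | h | h) <;> subst h
    · exact ⟨by simp, Or.inl ⟨rfl, rfl⟩⟩
    · exact ⟨by simp, Or.inr (Or.inl ⟨by simp, by simp⟩)⟩
    · exact ⟨by simp, Or.inr (Or.inr (Or.inl ⟨by simp, by simp⟩))⟩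
    · exact ⟨by simp, Or.inr (Or.inr (Or.inr ⟨by simp, by simp⟩))⟩

lemma adj_inr_inl (x y : ZMod n × ZMod m) :
    (UJL n m).Adj (Sum.inr x) (Sum.inl y) ↔
      (y = x ∨ y = x + (1,0) ∨ y = x + (0,1) ∨ y = x + (1,1)) := by
  rw [UJL, SimpleGraph.fromRel_adj]
  simp only [UJLRel, ne_eq, false_or]
  constructor
  · rintro ⟨hne, ⟨h1, h2⟩ | ⟨h1, h2⟩ | ⟨h1, h2⟩ | ⟨h1, h2⟩⟩
    · exact Or.inl (Prod.ext_iff.mpr ⟨h1.symm, h2.symm⟩)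
    · exact Or.inr (Or.inl (Prod.ext_iff.mpr ⟨by simp [h1], by simp [h2.symm]⟩))
    · exact Or.inr (Or.inr (Or.inl (Prod.ext_iff.mpr ⟨by simp [h1.symm], by simp [h2]⟩)))
    · exact Or.inr (Or.inr (Or.inr (Prod.ext_iff.mpr ⟨by simp [h1], by simp [h2]⟩)))
  · rintro (h | h | h | h) <;> subst h
    · exact ⟨by simp, Or.inl ⟨rfl, rfl⟩⟩
    · exact ⟨by simp, Or.inr (Or.inl ⟨by simp, by simp⟩)⟩
    · exact ⟨by simp, Or.inr (Or.inr (Or.inl ⟨by simp, by simp⟩))⟩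
    · exact ⟨by simp, Or.inr (Or.inr (Or.inr ⟨by simp, by simp⟩))⟩

lemma adj_inr_inr (x y : ZMod n × ZMod m) :
    ¬ (UJL n m).Adj (Sum.inr x) (Sum.inr y) := by
  rw [UJL, SimpleGraph.fromRel_adj]
  simp [UJLRel]

end Adj


section Sums

variable {n m : ℕ} [NeZero n] [NeZero m] {M : Type*} [AddCommMonoid M]

lemma sum_adj_inl_inl (h3n : 3 ≤ n) (h3m : 3 ≤ m) (x : ZMod n × ZMod m)
    (f : ZMod n × ZMod m → M) :
    ∑ y : ZMod n × ZMod m, (if (UJL n m).Adj (Sum.inl x) (Sum.inl y) then f y else 0)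
      = f (x + (1,0)) + f (x - (1,0)) + f (x + (0,1)) + f (x - (0,1)) := by
  simp_rw [adj_inl_inl h3n h3m]
  refine sum_ite_four f _ _ _ _ ?_ ?_ ?_ ?_ ?_ ?_
  · intro h
    have h1 : x.1 + 1 = x.1 - 1 := congrArg Prod.fst h
    exact zmod_one_ne_neg_one h3n (by linear_combination h1)
  · intro h
    have h1 : x.1 + 1 = x.1 + 0 := congrArg Prod.fst h
    exact zmod_one_ne_zero h3n (by linear_combination h1)
  · intro h
    have h1 : x.1 + 1 = x.1 - 0 := congrArg Prod.fst h
    exact zmod_one_ne_zero h3n (by linear_combination h1)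
  · intro h
    have h1 : x.1 - 1 = x.1 + 0 := congrArg Prod.fst h
    exact zmod_one_ne_zero h3n (by linear_combination -h1)
  · intro h
    have h1 : x.1 - 1 = x.1 - 0 := congrArg Prod.fst h
    exact zmod_one_ne_zero h3n (by linear_combination -h1)
  · intro h
    have h1 : x.2 + 1 = x.2 - 1 := congrArg Prod.snd h
    exact zmod_one_ne_neg_one h3m (by linear_combination h1)

lemma sum_adj_inl_inr (h3n : 3 ≤ n) (h3m : 3 ≤ m) (x : ZMod n × ZMod m)
    (f : ZMod n × ZMod m → M) :
    ∑ y : ZMod n × ZMod m, (if (UJL n m).Adj (Sum.inl x) (Sum.inr y) then f y else 0)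
      = f x + f (x - (1,0)) + f (x - (0,1)) + f (x - (1,1)) := by
  simp_rw [adj_inl_inr]
  refine sum_ite_four f _ _ _ _ ?_ ?_ ?_ ?_ ?_ ?_
  · intro h
    have h1 : x.1 = x.1 - 1 := congrArg Prod.fst h
    exact zmod_one_ne_zero h3n (by linear_combination h1)
  · intro h
    have h1 : x.2 = x.2 - 1 := congrArg Prod.snd h
    exact zmod_one_ne_zero h3m (by linear_combination h1)
  · intro h
    have h1 : x.1 = x.1 - 1 := congrArg Prod.fst h
    exact zmod_one_ne_zero h3n (by linear_combination h1)
  · intro h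
    have h1 : x.1 - 1 = x.1 - 0 := congrArg Prod.fst h
    exact zmod_one_ne_zero h3n (by linear_combination -h1)
  · intro h
    have h1 : x.2 - 0 = x.2 - 1 := congrArg Prod.snd h
    exact zmod_one_ne_zero h3m (by linear_combination h1)
  · intro h
    have h1 : x.1 - 0 = x.1 - 1 := congrArg Prod.fst h
    exact zmod_one_ne_zero h3n (by linear_combination h1)

lemma sum_adj_inr_inl (h3n : 3 ≤ n) (h3m : 3 ≤ m) (x : ZMod n × ZMod m)
    (f : ZMod n × ZMod m → M) :
    ∑ y : ZMod n × ZMod m, (if (UJL n m).Adj (Sum.inr x) (Sum.inl y) then f y else 0)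
      = f x + f (x + (1,0)) + f (x + (0,1)) + f (x + (1,1)) := by
  simp_rw [adj_inr_inl]
  refine sum_ite_four f _ _ _ _ ?_ ?_ ?_ ?_ ?_ ?_
  · intro h
    have h1 : x.1 = x.1 + 1 := congrArg Prod.fst h
    exact zmod_one_ne_zero h3n (by linear_combination -h1)
  · intro h
    have h1 : x.2 = x.2 + 1 := congrArg Prod.snd h
    exact zmod_one_ne_zero h3m (by linear_combination -h1)
  · intro h
    have h1 : x.1 = x.1 + 1 := congrArg Prod.fst h
    exact zmod_one_ne_zero h3n (by linear_combination -h1)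
  · intro h
    have h1 : x.1 + 1 = x.1 + 0 := congrArg Prod.fst h
    exact zmod_one_ne_zero h3n (by linear_combination h1)
  · intro h
    have h1 : x.2 + 0 = x.2 + 1 := congrArg Prod.snd h
    exact zmod_one_ne_zero h3m (by linear_combination -h1)
  · intro h
    have h1 : x.1 + 0 = x.1 + 1 := congrArg Prod.fst h
    exact zmod_one_ne_zero h3n (by linear_combination -h1)

lemma sum_adj_inr_inr (x : ZMod n × ZMod m) (f : ZMod n × ZMod m → M) :
    ∑ y : ZMod n × ZMod m, (if (UJL n m).Adj (Sum.inr x) (Sum.inr y) then f y else 0) = 0 := by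
  rw [Finset.sum_eq_zero]
  intro y _
  simp [adj_inr_inr]

lemma degree_inl (h3n : 3 ≤ n) (h3m : 3 ≤ m) (x : ZMod n × ZMod m) :
    (UJL n m).degree (Sum.inl x) = 8 := by
  rw [show (UJL n m).degree (Sum.inl x) = ((UJL n m).neighborFinset (Sum.inl x)).card from rfl,
    SimpleGraph.neighborFinset_eq_filter, Finset.card_filter]
  rw [Fintype.sum_sum_type]
  rw [sum_adj_inl_inl h3n h3m x (fun _ => 1), sum_adj_inl_inr h3n h3m x (fun _ => 1)]
  norm_num

lemma degree_inr (h3n : 3 ≤ n) (h3m : 3 ≤ m) (x : ZMod n × ZMod m) :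
    (UJL n m).degree (Sum.inr x) = 4 := by
  rw [show (UJL n m).degree (Sum.inr x) = ((UJL n m).neighborFinset (Sum.inr x)).card from rfl,
    SimpleGraph.neighborFinset_eq_filter, Finset.card_filter]
  rw [Fintype.sum_sum_type]
  rw [sum_adj_inr_inl h3n h3m x (fun _ => 1), sum_adj_inr_inr x (fun _ => 1)]
  norm_num

end Sums


section Chi

variable (n m : ℕ) [NeZero n] [NeZero m]

/-- character of the product group -/
def χ (k x : ZMod n × ZMod m) : ℂ := ψ n (k.1 * x.1) * ψ m (k.2 * x.2)

lemma chi_add (k x y : ZMod n × ZMod m) : χ n m k (x + y) = χ n m k x * χ n m k y := by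
  unfold χ
  have h1 : k.1 * (x + y).1 = k.1 * x.1 + k.1 * y.1 := by
    change k.1 * (x.1 + y.1) = _; ring
  have h2 : k.2 * (x + y).2 = k.2 * x.2 + k.2 * y.2 := by
    change k.2 * (x.2 + y.2) = _; ring
  rw [h1, h2, psi_add, psi_add]
  ring

lemma conj_chi (k x : ZMod n × ZMod m) :
    (starRingEnd ℂ) (χ n m k x) = χ n m k (-x) := by
  unfold χ
  rw [map_mul, conj_psi, conj_psi]
  have h1 : -(k.1 * x.1) = k.1 * (-x).1 := by change _ = k.1 * (-x.1); ring
  have h2 : -(k.2 * x.2) = k.2 * (-x).2 := by change _ = k.2 * (-x.2); ring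
  rw [h1, h2]

lemma sum_chi (z : ZMod n × ZMod m) :
    ∑ k : ZMod n × ZMod m, χ n m k z = if z = 0 then ((n * m : ℕ) : ℂ) else 0 := by
  rw [Fintype.sum_prod_type]
  unfold χ
  change ∑ a : ZMod n, ∑ b : ZMod m, ψ n (a * z.1) * ψ m (b * z.2) = _
  rw [← Finset.sum_mul_sum]
  rw [sum_psi_mul, sum_psi_mul]
  by_cases h1 : z.1 = 0 <;> by_cases h2 : z.2 = 0 <;>
    simp [h1, h2, Prod.ext_iff, Nat.cast_mul]

lemma chi_E1 (k : ZMod n × ZMod m) : χ n m k (1,0) = ψ n k.1 := by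
  simp [χ, psi_zero]

lemma chi_E2 (k : ZMod n × ZMod m) : χ n m k (0,1) = ψ m k.2 := by
  simp [χ, psi_zero]

lemma chi_neg_E1 (k : ZMod n × ZMod m) : χ n m k (-(1,0)) = ψ n (-k.1) := by
  have : χ n m k (-(1,0)) = ψ n (k.1 * (-1)) * ψ m (k.2 * (-0)) := rfl
  rw [this]
  simp [psi_zero]

lemma chi_neg_E2 (k : ZMod n × ZMod m) : χ n m k (-(0,1)) = ψ m (-k.2) := by
  have : χ n m k (-(0,1)) = ψ n (k.1 * (-0)) * ψ m (k.2 * (-1)) := rfl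
  rw [this]
  simp [psi_zero]

lemma chi_E11 (k : ZMod n × ZMod m) : χ n m k (1,1) = ψ n k.1 * ψ m k.2 := by
  simp [χ]

lemma chi_neg_E11 (k : ZMod n × ZMod m) : χ n m k (-(1,1)) = ψ n (-k.1) * ψ m (-k.2) := by
  have : χ n m k (-(1,1)) = ψ n (k.1 * (-1)) * ψ m (k.2 * (-1)) := rfl
  rw [this]
  simp

lemma chi_sub (k x w : ZMod n × ZMod m) : χ n m k (x - w) = χ n m k x * χ n m k (-w) := by
  rw [sub_eq_add_neg, chi_add]

end Chi


section Mats

variable (n m : ℕ) [NeZero n] [NeZero m]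

def M00 (k : ZMod n × ZMod m) : ℂ := 8 - ψ n k.1 - ψ n (-k.1) - ψ m k.2 - ψ m (-k.2)
def M01 (k : ZMod n × ZMod m) : ℂ := -((1 + ψ n (-k.1)) * (1 + ψ m (-k.2)))
def M10 (k : ZMod n × ZMod m) : ℂ := -((1 + ψ n k.1) * (1 + ψ m k.2))

def Pmat : Matrix (UJLVert n m) (UJLVert n m) ℂ :=
  Matrix.fromBlocks (Matrix.of fun x k => χ n m k x) 0 0 (Matrix.of fun x k => χ n m k x)

def Dmat : Matrix (UJLVert n m) (UJLVert n m) ℂ :=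
  Matrix.fromBlocks (Matrix.diagonal (M00 n m)) (Matrix.diagonal (M01 n m))
    (Matrix.diagonal (M10 n m)) (Matrix.diagonal fun _ => 4)

def Lc : Matrix (UJLVert n m) (UJLVert n m) ℂ :=
  Matrix.diagonal (fun v => ((UJL n m).degree v : ℂ)) - (UJL n m).adjMatrix ℂ

lemma lap_map_eq :
    (laplacianUJL n m).map (Complex.ofRealHom : ℝ →+* ℂ) = Lc n m := by
  ext v w
  simp only [laplacianUJL, Lc, Matrix.map_apply, Matrix.sub_apply, Matrix.diagonal_apply,
    SimpleGraph.adjMatrix_apply, map_sub, apply_ite (⇑(Complex.ofRealHom : ℝ →+* ℂ))]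
  push_cast
  norm_num

/-- row sums against characters: the `(inl, inl)` case -/
lemma AP_inl_inl (h3n : 3 ≤ n) (h3m : 3 ≤ m) (x k : ZMod n × ZMod m) :
    ((UJL n m).adjMatrix ℂ * Pmat n m) (Sum.inl x) (Sum.inl k)
      = χ n m k x * (ψ n k.1 + ψ n (-k.1) + ψ m k.2 + ψ m (-k.2)) := by
  rw [Matrix.mul_apply, Fintype.sum_sum_type]
  have e1 : ∀ y : ZMod n × ZMod m,
      (UJL n m).adjMatrix ℂ (Sum.inl x) (Sum.inl y) * Pmat n m (Sum.inl y) (Sum.inl k)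
      = (if (UJL n m).Adj (Sum.inl x) (Sum.inl y) then χ n m k y else 0) := by
    intro y
    simp [Pmat, SimpleGraph.adjMatrix_apply, ite_mul]
  have e2 : ∀ y : ZMod n × ZMod m,
      (UJL n m).adjMatrix ℂ (Sum.inl x) (Sum.inr y) * Pmat n m (Sum.inr y) (Sum.inl k) = 0 := by
    intro y
    simp [Pmat]
  simp_rw [e1, e2]
  rw [sum_adj_inl_inl h3n h3m x (fun y => χ n m k y), Finset.sum_const_zero, add_zero]
  rw [chi_add, chi_sub, chi_add, chi_sub, chi_E1, chi_neg_E1, chi_E2, chi_neg_E2]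
  ring

lemma AP_inl_inr (h3n : 3 ≤ n) (h3m : 3 ≤ m) (x k : ZMod n × ZMod m) :
    ((UJL n m).adjMatrix ℂ * Pmat n m) (Sum.inl x) (Sum.inr k)
      = χ n m k x * ((1 + ψ n (-k.1)) * (1 + ψ m (-k.2))) := by
  rw [Matrix.mul_apply, Fintype.sum_sum_type]
  have e1 : ∀ y : ZMod n × ZMod m,
      (UJL n m).adjMatrix ℂ (Sum.inl x) (Sum.inl y) * Pmat n m (Sum.inl y) (Sum.inr k) = 0 := by
    intro y
    simp [Pmat]
  have e2 : ∀ y : ZMod n × ZMod m,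
      (UJL n m).adjMatrix ℂ (Sum.inl x) (Sum.inr y) * Pmat n m (Sum.inr y) (Sum.inr k)
      = (if (UJL n m).Adj (Sum.inl x) (Sum.inr y) then χ n m k y else 0) := by
    intro y
    simp [Pmat, SimpleGraph.adjMatrix_apply, ite_mul]
  simp_rw [e1, e2]
  rw [Finset.sum_const_zero, zero_add]
  rw [sum_adj_inl_inr h3n h3m x (fun y => χ n m k y)]
  rw [chi_sub, chi_sub, chi_sub, chi_neg_E1, chi_neg_E2, chi_neg_E11]
  ring

lemma AP_inr_inl (h3n : 3 ≤ n) (h3m : 3 ≤ m) (x k : ZMod n × ZMod m) :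
    ((UJL n m).adjMatrix ℂ * Pmat n m) (Sum.inr x) (Sum.inl k)
      = χ n m k x * ((1 + ψ n k.1) * (1 + ψ m k.2)) := by
  rw [Matrix.mul_apply, Fintype.sum_sum_type]
  have e1 : ∀ y : ZMod n × ZMod m,
      (UJL n m).adjMatrix ℂ (Sum.inr x) (Sum.inl y) * Pmat n m (Sum.inl y) (Sum.inl k)
      = (if (UJL n m).Adj (Sum.inr x) (Sum.inl y) then χ n m k y else 0) := by
    intro y
    simp [Pmat, SimpleGraph.adjMatrix_apply, ite_mul]
  have e2 : ∀ y : ZMod n × ZMod m,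
      (UJL n m).adjMatrix ℂ (Sum.inr x) (Sum.inr y) * Pmat n m (Sum.inr y) (Sum.inl k) = 0 := by
    intro y
    simp [Pmat]
  simp_rw [e1, e2]
  rw [Finset.sum_const_zero, add_zero]
  rw [sum_adj_inr_inl h3n h3m x (fun y => χ n m k y)]
  rw [chi_add, chi_add, chi_add, chi_E1, chi_E2, chi_E11]
  ring

lemma AP_inr_inr (x k : ZMod n × ZMod m) :
    ((UJL n m).adjMatrix ℂ * Pmat n m) (Sum.inr x) (Sum.inr k) = 0 := by
  rw [Matrix.mul_apply, Fintype.sum_sum_type]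
  have e1 : ∀ y : ZMod n × ZMod m,
      (UJL n m).adjMatrix ℂ (Sum.inr x) (Sum.inl y) * Pmat n m (Sum.inl y) (Sum.inr k) = 0 := by
    intro y
    simp [Pmat]
  have e2 : ∀ y : ZMod n × ZMod m,
      (UJL n m).adjMatrix ℂ (Sum.inr x) (Sum.inr y) * Pmat n m (Sum.inr y) (Sum.inr k) = 0 := by
    intro y
    simp [adj_inr_inr]
  simp_rw [e1, e2]
  simp

end Mats


section Mats2

variable (n m : ℕ) [NeZero n] [NeZero m]

lemma PD_apply_inl_inl (x k : ZMod n × ZMod m) :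
    (Pmat n m * Dmat n m) (Sum.inl x) (Sum.inl k) = χ n m k x * M00 n m k := by
  rw [Matrix.mul_apply, Fintype.sum_sum_type]
  have e1 : ∀ k' : ZMod n × ZMod m,
      Pmat n m (Sum.inl x) (Sum.inl k') * Dmat n m (Sum.inl k') (Sum.inl k)
      = if k' = k then χ n m k' x * M00 n m k' else 0 := by
    intro k'
    simp [Pmat, Dmat, Matrix.diagonal_apply, mul_ite]
  have e2 : ∀ k' : ZMod n × ZMod m,
      Pmat n m (Sum.inl x) (Sum.inr k') * Dmat n m (Sum.inr k') (Sum.inl k) = 0 := by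
    intro k'
    simp [Pmat]
  simp_rw [e1, e2]
  rw [Finset.sum_const_zero, add_zero, Finset.sum_ite_eq' Finset.univ k
    (fun k' => χ n m k' x * M00 n m k')]
  simp

lemma PD_apply_inl_inr (x k : ZMod n × ZMod m) :
    (Pmat n m * Dmat n m) (Sum.inl x) (Sum.inr k) = χ n m k x * M01 n m k := by
  rw [Matrix.mul_apply, Fintype.sum_sum_type]
  have e1 : ∀ k' : ZMod n × ZMod m,
      Pmat n m (Sum.inl x) (Sum.inl k') * Dmat n m (Sum.inl k') (Sum.inr k)
      = if k' = k then χ n m k' x * M01 n m k' else 0 := by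
    intro k'
    simp [Pmat, Dmat, Matrix.diagonal_apply, mul_ite]
  have e2 : ∀ k' : ZMod n × ZMod m,
      Pmat n m (Sum.inl x) (Sum.inr k') * Dmat n m (Sum.inr k') (Sum.inr k) = 0 := by
    intro k'
    simp [Pmat]
  simp_rw [e1, e2]
  rw [Finset.sum_const_zero, add_zero, Finset.sum_ite_eq' Finset.univ k
    (fun k' => χ n m k' x * M01 n m k')]
  simp

lemma PD_apply_inr_inl (x k : ZMod n × ZMod m) :
    (Pmat n m * Dmat n m) (Sum.inr x) (Sum.inl k) = χ n m k x * M10 n m k := by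
  rw [Matrix.mul_apply, Fintype.sum_sum_type]
  have e1 : ∀ k' : ZMod n × ZMod m,
      Pmat n m (Sum.inr x) (Sum.inl k') * Dmat n m (Sum.inl k') (Sum.inl k) = 0 := by
    intro k'
    simp [Pmat]
  have e2 : ∀ k' : ZMod n × ZMod m,
      Pmat n m (Sum.inr x) (Sum.inr k') * Dmat n m (Sum.inr k') (Sum.inl k)
      = if k' = k then χ n m k' x * M10 n m k' else 0 := by
    intro k'
    simp [Pmat, Dmat, Matrix.diagonal_apply, mul_ite]
  simp_rw [e1, e2]
  rw [Finset.sum_const_zero, zero_add, Finset.sum_ite_eq' Finset.univ k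
    (fun k' => χ n m k' x * M10 n m k')]
  simp

lemma PD_apply_inr_inr (x k : ZMod n × ZMod m) :
    (Pmat n m * Dmat n m) (Sum.inr x) (Sum.inr k) = χ n m k x * 4 := by
  rw [Matrix.mul_apply, Fintype.sum_sum_type]
  have e1 : ∀ k' : ZMod n × ZMod m,
      Pmat n m (Sum.inr x) (Sum.inl k') * Dmat n m (Sum.inl k') (Sum.inr k) = 0 := by
    intro k'
    simp [Pmat]
  have e2 : ∀ k' : ZMod n × ZMod m,
      Pmat n m (Sum.inr x) (Sum.inr k') * Dmat n m (Sum.inr k') (Sum.inr k)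
      = if k' = k then χ n m k' x * 4 else 0 := by
    intro k'
    simp [Pmat, Dmat, Matrix.diagonal_apply, mul_ite]
  simp_rw [e1, e2]
  rw [Finset.sum_const_zero, zero_add, Finset.sum_ite_eq' Finset.univ k
    (fun k' => χ n m k' x * 4)]
  simp

lemma LP_eq_PD (h3n : 3 ≤ n) (h3m : 3 ≤ m) :
    Lc n m * Pmat n m = Pmat n m * Dmat n m := by
  ext v c
  rw [Lc, Matrix.sub_mul, Matrix.sub_apply, Matrix.diagonal_mul]
  cases v with
  | inl x =>
    cases c with
    | inl k =>
      rw [AP_inl_inl n m h3n h3m x k, PD_apply_inl_inl, degree_inl h3n h3m]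
      show ((8 : ℕ) : ℂ) * χ n m k x - _ = _
      rw [M00]
      push_cast
      ring_nf
    | inr k =>
      rw [AP_inl_inr n m h3n h3m x k, PD_apply_inl_inr]
      have hP : Pmat n m (Sum.inl x) (Sum.inr k) = 0 := by simp [Pmat]
      rw [hP, M01]
      ring
  | inr x =>
    cases c with
    | inl k =>
      rw [AP_inr_inl n m h3n h3m x k, PD_apply_inr_inl]
      have hP : Pmat n m (Sum.inr x) (Sum.inl k) = 0 := by simp [Pmat]
      rw [hP, M10]
      ring
    | inr k =>
      rw [AP_inr_inr, PD_apply_inr_inr, degree_inr h3n h3m]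
      have hP : Pmat n m (Sum.inr x) (Sum.inr k) = χ n m k x := by simp [Pmat]
      rw [hP]
      push_cast
      ring

end Mats2


section Conj

open Polynomial

/-- conjugation invariance of the characteristic polynomial -/
lemma charpoly_conj_eq {N : Type*} [Fintype N] [DecidableEq N] {R : Type*} [CommRing R]
    (A P Q : Matrix N N R) (hPQ : P * Q = 1) (hQP : Q * P = 1) :
    (P * A * Q).charpoly = A.charpoly := by
  unfold Matrix.charpoly
  have hmap : (P * A * Q).charmatrix
      = (Polynomial.C.mapMatrix P) * A.charmatrix * (Polynomial.C.mapMatrix Q) := by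
    unfold Matrix.charmatrix
    rw [Matrix.mul_sub, Matrix.sub_mul]
    congr 1
    · have hcomm : Matrix.scalar N (X : R[X]) * (Polynomial.C.mapMatrix Q)
          = (Polynomial.C.mapMatrix Q) * Matrix.scalar N (X : R[X]) :=
        (Matrix.scalar_commute (X : R[X]) (fun r' => Commute.all _ r') _).eq
      rw [Matrix.mul_assoc, hcomm, ← Matrix.mul_assoc, ← map_mul, hPQ]
      simp
    · rw [map_mul, map_mul]
  rw [hmap, Matrix.det_mul, Matrix.det_mul]
  have hdet : (Polynomial.C.mapMatrix P).det * (Polynomial.C.mapMatrix Q).det = 1 := by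
    rw [← Matrix.det_mul, ← map_mul, hPQ]
    simp
  ring_nf
  calc (Polynomial.C.mapMatrix P).det * A.charmatrix.det * (Polynomial.C.mapMatrix Q).det
      = ((Polynomial.C.mapMatrix P).det * (Polynomial.C.mapMatrix Q).det)
        * A.charmatrix.det := by ring
    _ = A.charmatrix.det := by rw [hdet, one_mul]

end Conj

section PInv

variable (n m : ℕ) [NeZero n] [NeZero m]

lemma P_mul_Ph : Pmat n m * (Pmat n m)ᴴ = ((n * m : ℕ) : ℂ) • 1 := by
  ext v w
  rw [Matrix.mul_apply, Fintype.sum_sum_type]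
  cases v with
  | inl x =>
    cases w with
    | inl y =>
      have e1 : ∀ k : ZMod n × ZMod m,
          Pmat n m (Sum.inl x) (Sum.inl k) * (Pmat n m)ᴴ (Sum.inl k) (Sum.inl y)
          = χ n m k (x - y) := by
        intro k
        simp only [Pmat, Matrix.conjTranspose_apply, Matrix.fromBlocks_apply₁₁, Matrix.of_apply]
        rw [show (star (χ n m k y) : ℂ) = (starRingEnd ℂ) (χ n m k y) from rfl,
          conj_chi, ← chi_sub]
      have e2 : ∀ k : ZMod n × ZMod m,
          Pmat n m (Sum.inl x) (Sum.inr k) * (Pmat n m)ᴴ (Sum.inr k) (Sum.inl y) = 0 := by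
        intro k
        simp [Pmat]
      simp_rw [e1, e2]
      rw [Finset.sum_const_zero, add_zero, sum_chi]
      by_cases hxy : x = y <;>
        simp [hxy, sub_eq_zero, Matrix.one_apply, Matrix.smul_apply]
    | inr y =>
      have e1 : ∀ k : ZMod n × ZMod m,
          Pmat n m (Sum.inl x) (Sum.inl k) * (Pmat n m)ᴴ (Sum.inl k) (Sum.inr y) = 0 := by
        intro k
        simp [Pmat, Matrix.conjTranspose_apply]
      have e2 : ∀ k : ZMod n × ZMod m,
          Pmat n m (Sum.inl x) (Sum.inr k) * (Pmat n m)ᴴ (Sum.inr k) (Sum.inr y) = 0 := by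
        intro k
        simp [Pmat]
      simp_rw [e1, e2]
      simp [Matrix.one_apply, Matrix.smul_apply]
  | inr x =>
    cases w with
    | inl y =>
      have e1 : ∀ k : ZMod n × ZMod m,
          Pmat n m (Sum.inr x) (Sum.inl k) * (Pmat n m)ᴴ (Sum.inl k) (Sum.inl y) = 0 := by
        intro k
        simp [Pmat]
      have e2 : ∀ k : ZMod n × ZMod m,
          Pmat n m (Sum.inr x) (Sum.inr k) * (Pmat n m)ᴴ (Sum.inr k) (Sum.inl y) = 0 := by
        intro k
        simp [Pmat, Matrix.conjTranspose_apply]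
      simp_rw [e1, e2]
      simp [Matrix.one_apply, Matrix.smul_apply]
    | inr y =>
      have e1 : ∀ k : ZMod n × ZMod m,
          Pmat n m (Sum.inr x) (Sum.inl k) * (Pmat n m)ᴴ (Sum.inl k) (Sum.inr y) = 0 := by
        intro k
        simp [Pmat]
      have e2 : ∀ k : ZMod n × ZMod m,
          Pmat n m (Sum.inr x) (Sum.inr k) * (Pmat n m)ᴴ (Sum.inr k) (Sum.inr y)
          = χ n m k (x - y) := by
        intro k
        simp only [Pmat, Matrix.conjTranspose_apply, Matrix.fromBlocks_apply₂₂, Matrix.of_apply]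
        rw [show (star (χ n m k y) : ℂ) = (starRingEnd ℂ) (χ n m k y) from rfl,
          conj_chi, ← chi_sub]
      simp_rw [e1, e2]
      rw [Finset.sum_const_zero, zero_add, sum_chi]
      by_cases hxy : x = y <;>
        simp [hxy, sub_eq_zero, Matrix.one_apply, Matrix.smul_apply]

lemma charpoly_Lc_eq_charpoly_D (h3n : 3 ≤ n) (h3m : 3 ≤ m) :
    (Lc n m).charpoly = (Dmat n m).charpoly := by
  have hc : ((n * m : ℕ) : ℂ) ≠ 0 := by
    have : n * m ≠ 0 := Nat.mul_ne_zero (NeZero.ne n) (NeZero.ne m)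
    exact_mod_cast this
  set c : ℂ := ((n * m : ℕ) : ℂ) with hcdef
  set Q : Matrix (UJLVert n m) (UJLVert n m) ℂ := c⁻¹ • (Pmat n m)ᴴ with hQ
  have hPQ : Pmat n m * Q = 1 := by
    rw [hQ, Matrix.mul_smul, P_mul_Ph, smul_smul, inv_mul_cancel₀ hc, one_smul]
  have hQP : Q * Pmat n m = 1 := mul_eq_one_comm.mp hPQ
  have hL : Lc n m = Pmat n m * Dmat n m * Q := by
    calc Lc n m = Lc n m * (Pmat n m * Q) := by rw [hPQ, Matrix.mul_one]
      _ = (Lc n m * Pmat n m) * Q := by rw [Matrix.mul_assoc]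
      _ = Pmat n m * Dmat n m * Q := by rw [LP_eq_PD n m h3n h3m]
  rw [hL]
  exact charpoly_conj_eq (Dmat n m) (Pmat n m) Q hPQ hQP

end PInv


section BlockDet

open Polynomial

variable {R : Type*} [CommRing R] {G : Type*} [Fintype G] [DecidableEq G]

/-- the interleaving equivalence -/
def interEquiv {G : Type*} : Fin 2 × G ≃ G ⊕ G where
  toFun p := if p.1 = 0 then Sum.inl p.2 else Sum.inr p.2
  invFun v := Sum.elim (fun k => ((0 : Fin 2), k)) (fun k => ((1 : Fin 2), k)) v
  left_inv p := by
    rcases p with ⟨s, k⟩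
    fin_cases s <;> simp
  right_inv v := by
    rcases v with k | k <;> simp

lemma det_fromBlocks_diagonal (a b c d : G → R) :
    (Matrix.fromBlocks (Matrix.diagonal a) (Matrix.diagonal b)
      (Matrix.diagonal c) (Matrix.diagonal d)).det
    = ∏ k : G, (a k * d k - b k * c k) := by
  have hre : Matrix.fromBlocks (Matrix.diagonal a) (Matrix.diagonal b)
      (Matrix.diagonal c) (Matrix.diagonal d)
      = Matrix.reindex (interEquiv (G := G)) (interEquiv (G := G))
        (Matrix.blockDiagonal fun k => !![a k, b k; c k, d k]) := by
    ext v w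
    rcases v with k | k <;> rcases w with k' | k' <;>
      · simp only [Matrix.reindex_apply, Matrix.submatrix_apply, interEquiv,
          Equiv.coe_fn_symm_mk, Sum.elim_inl, Sum.elim_inr, Matrix.blockDiagonal_apply,
          Matrix.fromBlocks_apply₁₁, Matrix.fromBlocks_apply₁₂, Matrix.fromBlocks_apply₂₁,
          Matrix.fromBlocks_apply₂₂, Matrix.diagonal_apply]
        by_cases hk : k = k' <;> simp [hk]
  rw [hre, Matrix.det_reindex_self, Matrix.det_blockDiagonal]
  refine Finset.prod_congr rfl (fun k _ => ?_)
  rw [Matrix.det_fin_two]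
  simp

lemma charmatrix_fromBlocks_diagonal (a b c d : G → R) :
    (Matrix.fromBlocks (Matrix.diagonal a) (Matrix.diagonal b)
      (Matrix.diagonal c) (Matrix.diagonal d)).charmatrix
    = Matrix.fromBlocks (Matrix.diagonal fun k => (X : R[X]) - C (a k))
        (Matrix.diagonal fun k => -C (b k))
        (Matrix.diagonal fun k => -C (c k))
        (Matrix.diagonal fun k => (X : R[X]) - C (d k)) := by
  ext v w
  rw [Matrix.charmatrix_apply]
  rcases v with k | k <;> rcases w with k' | k' <;>
    · simp only [Matrix.fromBlocks_apply₁₁, Matrix.fromBlocks_apply₁₂,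
        Matrix.fromBlocks_apply₂₁, Matrix.fromBlocks_apply₂₂, Matrix.diagonal_apply,
        Sum.inl.injEq, Sum.inr.injEq]
      by_cases hk : k = k' <;> simp [hk, Matrix.one_apply]

lemma charpoly_fromBlocks_diagonal (a b c d : G → R) :
    (Matrix.fromBlocks (Matrix.diagonal a) (Matrix.diagonal b)
      (Matrix.diagonal c) (Matrix.diagonal d)).charpoly
    = ∏ k : G, ((X - C (a k)) * (X - C (d k)) - C (b k) * C (c k)) := by
  rw [Matrix.charpoly, charmatrix_fromBlocks_diagonal, det_fromBlocks_diagonal]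
  refine Finset.prod_congr rfl (fun k _ => ?_)
  ring

end BlockDet


section RealForm

open Polynomial

/-- `cos (2 π a / n)` for `a : ZMod n`. -/
def cψ (n : ℕ) (a : ZMod n) : ℝ := Real.cos (2 * Real.pi * a.val / n)

lemma psi_add_neg (n : ℕ) [NeZero n] (a : ZMod n) :
    ψ n a + ψ n (-a) = ((2 * cψ n a : ℝ) : ℂ) := by
  rw [← conj_psi, Complex.add_conj, ψ, Complex.exp_ofReal_mul_I_re]
  rfl

lemma psi_one_mul (n : ℕ) [NeZero n] (a : ZMod n) :
    (1 + ψ n a) * (1 + ψ n (-a)) = ((2 + 2 * cψ n a : ℝ) : ℂ) := by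
  have h1 := psi_add_neg n a
  have h2 := psi_mul_psi_neg n a
  push_cast
  push_cast at h1
  linear_combination h1 + h2

variable (n m : ℕ) [NeZero n] [NeZero m]

def sR (k : ZMod n × ZMod m) : ℝ := 6 - cψ n k.1 - cψ m k.2

def pR (k : ZMod n × ZMod m) : ℝ :=
  7 - 3 * cψ n k.1 - 3 * cψ m k.2 - cψ n k.1 * cψ m k.2

/-- the real quadratic factor -/
def qR (k : ZMod n × ZMod m) : ℝ[X] :=
  X ^ 2 - C (2 * sR n m k) * X + C (4 * pR n m k)

lemma quad_eq (k : ZMod n × ZMod m) :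
    (X - C (M00 n m k)) * (X - C (4 : ℂ)) - C (M01 n m k) * C (M10 n m k)
      = (qR n m k).map (Complex.ofRealHom) := by
  have h00 : M00 n m k = ((8 - 2 * cψ n k.1 - 2 * cψ m k.2 : ℝ) : ℂ) := by
    have h1 := psi_add_neg n k.1
    have h2 := psi_add_neg m k.2
    rw [M00]
    push_cast
    push_cast at h1 h2
    linear_combination -h1 - h2
  have hprod : M01 n m k * M10 n m k
      = (((2 + 2 * cψ n k.1) * (2 + 2 * cψ m k.2) : ℝ) : ℂ) := by
    have h1 := psi_one_mul n k.1
    have h2 := psi_one_mul m k.2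
    calc M01 n m k * M10 n m k
        = ((1 + ψ n k.1) * (1 + ψ n (-k.1))) * ((1 + ψ m k.2) * (1 + ψ m (-k.2))) := by
          rw [M01, M10]; ring
      _ = _ := by rw [h1, h2]; push_cast; ring
  rw [← map_mul, hprod, h00]
  rw [qR]
  simp only [Polynomial.map_add, Polynomial.map_sub, Polynomial.map_mul, Polynomial.map_pow,
    Polynomial.map_X, Polynomial.map_C]
  have e1 : ((2 * sR n m k : ℝ) : ℂ) = ((8 - 2 * cψ n k.1 - 2 * cψ m k.2 : ℝ) : ℂ) + 4 := by
    push_cast [sR]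
    ring
  have e2 : ((4 * pR n m k : ℝ) : ℂ)
      = 4 * ((8 - 2 * cψ n k.1 - 2 * cψ m k.2 : ℝ) : ℂ)
        - (((2 + 2 * cψ n k.1) * (2 + 2 * cψ m k.2) : ℝ) : ℂ) := by
    push_cast [pR]
    ring
  rw [show (Complex.ofRealHom : ℝ →+* ℂ) (2 * sR n m k) = ((2 * sR n m k : ℝ) : ℂ) from rfl,
    show (Complex.ofRealHom : ℝ →+* ℂ) (4 * pR n m k) = ((4 * pR n m k : ℝ) : ℂ) from rfl,
    e1, e2, map_add, map_sub, map_mul]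
  ring

lemma charpoly_D_eq :
    (Dmat n m).charpoly = (∏ k : ZMod n × ZMod m, qR n m k).map (Complex.ofRealHom) := by
  rw [Dmat, charpoly_fromBlocks_diagonal]
  rw [Polynomial.map_prod]
  exact Finset.prod_congr rfl (fun k _ => quad_eq n m k)

lemma charpoly_lap_eq (h3n : 3 ≤ n) (h3m : 3 ≤ m) :
    (laplacianUJL n m).charpoly = ∏ k : ZMod n × ZMod m, qR n m k := by
  apply Polynomial.map_injective (Complex.ofRealHom : ℝ →+* ℂ) Complex.ofReal_injective
  rw [← Matrix.charpoly_map (laplacianUJL n m) (Complex.ofRealHom : ℝ →+* ℂ)]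
  rw [lap_map_eq, charpoly_Lc_eq_charpoly_D n m h3n h3m, charpoly_D_eq]

end RealForm


section Roots

open Polynomial

variable (n m : ℕ) [NeZero n] [NeZero m]

def rp (k : ZMod n × ZMod m) : ℝ := sR n m k + Real.sqrt ((sR n m k) ^ 2 - 4 * pR n m k)
def rm (k : ZMod n × ZMod m) : ℝ := sR n m k - Real.sqrt ((sR n m k) ^ 2 - 4 * pR n m k)

lemma disc_nonneg (k : ZMod n × ZMod m) : 0 ≤ (sR n m k) ^ 2 - 4 * pR n m k := by
  have h1 : -1 ≤ cψ n k.1 := Real.neg_one_le_cos _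
  have h2 : cψ n k.1 ≤ 1 := Real.cos_le_one _
  have h3 : -1 ≤ cψ m k.2 := Real.neg_one_le_cos _
  have h4 : cψ m k.2 ≤ 1 := Real.cos_le_one _
  rw [sR, pR]
  nlinarith [sq_nonneg (cψ n k.1 + cψ m k.2 - 2),
    mul_nonneg (by linarith : (0:ℝ) ≤ 1 + cψ n k.1) (by linarith : (0:ℝ) ≤ 1 + cψ m k.2)]

lemma qR_factor (k : ZMod n × ZMod m) :
    qR n m k = (X - C (rp n m k)) * (X - C (rm n m k)) := by
  have hs := Real.sq_sqrt (disc_nonneg n m k)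
  have h1 : 2 * sR n m k = rp n m k + rm n m k := by rw [rp, rm]; ring
  have h2 : 4 * pR n m k = rp n m k * rm n m k := by
    rw [rp, rm]
    linear_combination hs
  rw [qR, h1, h2, map_add, map_mul]
  ring

lemma qR_ne_zero (k : ZMod n × ZMod m) : qR n m k ≠ 0 := by
  rw [qR_factor]
  exact mul_ne_zero (X_sub_C_ne_zero _) (X_sub_C_ne_zero _)

lemma qR_roots (k : ZMod n × ZMod m) :
    (qR n m k).roots = {rp n m k} + {rm n m k} := by
  rw [qR_factor, Polynomial.roots_mul (by rw [← qR_factor]; exact qR_ne_zero n m k),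
    Polynomial.roots_X_sub_C, Polynomial.roots_X_sub_C]

lemma LEL_eq_sum (h3n : 3 ≤ n) (h3m : 3 ≤ m) :
    LEL_UJL n m = ∑ k : ZMod n × ZMod m, (Real.sqrt (rp n m k) + Real.sqrt (rm n m k)) := by
  rw [LEL_UJL, charpoly_lap_eq n m h3n h3m]
  rw [Polynomial.roots_prod _ _ (Finset.prod_ne_zero_iff.mpr (fun k _ => qR_ne_zero n m k))]
  rw [Multiset.map_bind, Multiset.sum_bind]
  rw [← Finset.sum_eq_multiset_sum]
  refine Finset.sum_congr rfl (fun k _ => ?_)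
  rw [qR_roots]
  simp

lemma zmod_sum_range {n : ℕ} [NeZero n] (f : ZMod n → ℝ) :
    ∑ a : ZMod n, f a = ∑ i ∈ Finset.range n, f (i : ZMod n) := by
  refine Finset.sum_nbij' (fun a => a.val) (fun i => (i : ZMod n)) ?_ ?_ ?_ ?_ ?_
  · intro a _
    exact Finset.mem_range.mpr (ZMod.val_lt a)
  · intro i _
    exact Finset.mem_univ _
  · intro a _
    exact ZMod.natCast_rightInverse a
  · intro i hi
    exact ZMod.val_natCast_of_lt (Finset.mem_range.mp hi)
  · intro a _
    rw [ZMod.natCast_rightInverse a]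

lemma cpsi_cast {n : ℕ} [NeZero n] {i : ℕ} (h : i < n) : cψ n (i : ZMod n) = cosα n i := by
  rw [cψ, cosα, ZMod.val_natCast_of_lt h]

end Roots

end UJLhelp

/-- For `n, m ≥ 3`,
`LEL(UJL(n,m)) = Σ_{i<n} Σ_{j<m} √((6 − cos α_i − cos β_j) + √((6 − cos α_i − cos β_j)² − 4(7 − 3cos α_i − 3cos β_j − cos α_i cos β_j)))`
`+ Σ_{i<n} Σ_{j<m} √((6 − cos α_i − cos β_j) − √((6 − cos α_i − cos β_j)² − 4(7 − 3cos α_i − 3cos β_j − cos α_i cos β_j)))`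
with `α_i = 2πi/n`, `β_j = 2πj/m`. -/
theorem LEL_UJL_formula (n m : ℕ) (hn : 3 ≤ n) (hm : 3 ≤ m) :
    haveI : NeZero n := ⟨by omega⟩
    haveI : NeZero m := ⟨by omega⟩
    LEL_UJL n m =
      (∑ i ∈ Finset.range n, ∑ j ∈ Finset.range m,
        Real.sqrt ((6 - cosα n i - cosα m j) +
          Real.sqrt ((6 - cosα n i - cosα m j) ^ 2 -
            4 * (7 - 3 * cosα n i - 3 * cosα m j - cosα n i * cosα m j)))) +
      (∑ i ∈ Finset.range n, ∑ j ∈ Finset.range m,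
        Real.sqrt ((6 - cosα n i - cosα m j) -
          Real.sqrt ((6 - cosα n i - cosα m j) ^ 2 -
            4 * (7 - 3 * cosα n i - 3 * cosα m j - cosα n i * cosα m j)))) := by
  haveI : NeZero n := ⟨by omega⟩
  haveI : NeZero m := ⟨by omega⟩
  show LEL_UJL n m = _
  rw [UJLhelp.LEL_eq_sum n m hn hm, Finset.sum_add_distrib]
  congr 1
  · rw [Fintype.sum_prod_type]
    rw [UJLhelp.zmod_sum_range (fun a => ∑ b : ZMod m, Real.sqrt (UJLhelp.rp n m (a, b)))]
    refine Finset.sum_congr rfl (fun i hi => ?_)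
    rw [UJLhelp.zmod_sum_range (fun b => Real.sqrt (UJLhelp.rp n m ((i : ZMod n), b)))]
    refine Finset.sum_congr rfl (fun j hj => ?_)
    have hi' := Finset.mem_range.mp hi
    have hj' := Finset.mem_range.mp hj
    simp only [UJLhelp.rp, UJLhelp.sR, UJLhelp.pR]
    rw [UJLhelp.cpsi_cast hi', UJLhelp.cpsi_cast hj']
  · rw [Fintype.sum_prod_type]
    rw [UJLhelp.zmod_sum_range (fun a => ∑ b : ZMod m, Real.sqrt (UJLhelp.rm n m (a, b)))]
    refine Finset.sum_congr rfl (fun i hi => ?_)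
    rw [UJLhelp.zmod_sum_range (fun b => Real.sqrt (UJLhelp.rm n m ((i : ZMod n), b)))]
    refine Finset.sum_congr rfl (fun j hj => ?_)
    have hi' := Finset.mem_range.mp hi
    have hj' := Finset.mem_range.mp hj
    simp only [UJLhelp.rm, UJLhelp.sR, UJLhelp.pR]
    rw [UJLhelp.cpsi_cast hi', UJLhelp.cpsi_cast hj']
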